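/- arXiv:2601.13170 — 8 statements merged into one kernel-verified Lean document; each statement's English description precedes it below -/
import Mathlib

section
/- Let (W(t), M(t)) be a solution of the synaptic ODE with timescale τ = 1/2 and initial condition (W₀, M₀) ∈ D. Then L(W(t), M(t)) = L(W₀, M₀)·e^{−8t} for all t ≥ 0. -/
/-! With `τ = 1/2` the defect `E = W Wᵀ - M²` obeys the linear equation `E' = -4 E`: the terms
`M⁻¹ W A Wᵀ` and `W A Wᵀ M⁻¹` produced by differentiating `W Wᵀ` and `M²` are the same (as `A`
and `M` are symmetric) and cancel. Hence `E(t) = e^{-4t} E(0)`, and `L = ‖E‖²` decays like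
`e^{-8t}`. -/

open Matrix Filter
open scoped Matrix

attribute [local instance] Matrix.frobeniusNormedAddCommGroup Matrix.frobeniusNormedSpace

/-- A solution of the synaptic ODE with timescale `τ` on `[0, ∞)`:
a continuously differentiable curve `t ↦ (W t, M t)` staying in the domain `D`
(i.e. `M t` symmetric positive definite) satisfying
`(1/2)·dW/dt = M⁻¹WA − W` and `τ·dM/dt = M⁻¹WAWᵀM⁻¹ − M`. -/
def IsSynSol {k n : ℕ} (A : Matrix (Fin n) (Fin n) ℝ) (τ : ℝ)
    (W : ℝ → Matrix (Fin k) (Fin n) ℝ) (M : ℝ → Matrix (Fin k) (Fin k) ℝ) : Prop :=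
  ∀ t : ℝ, 0 ≤ t →
    (M t).PosDef ∧
    HasDerivWithinAt W ((2 : ℝ) • ((M t)⁻¹ * W t * A - W t)) (Set.Ici 0) t ∧
    HasDerivWithinAt M (τ⁻¹ • ((M t)⁻¹ * W t * A * (W t)ᵀ * (M t)⁻¹ - M t)) (Set.Ici 0) t

/-- The Lyapunov function `L(W, M) = ‖WWᵀ − M²‖²` (Frobenius norm). -/
noncomputable def Lyap {k n : ℕ} (W : Matrix (Fin k) (Fin n) ℝ)
    (M : Matrix (Fin k) (Fin k) ℝ) : ℝ :=
  ‖W * Wᵀ - M * M‖ ^ 2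

open Set

section MatrixCalculus

variable {𝕜 : Type*} [RCLike 𝕜] {l m p : Type*} [Fintype l] [Fintype m] [Fintype p]
  {s : Set 𝕜} {x : 𝕜}

theorem HasDerivWithinAt.matrix_mul {f : 𝕜 → Matrix l m 𝕜} {g : 𝕜 → Matrix m p 𝕜}
    {f' : Matrix l m 𝕜} {g' : Matrix m p 𝕜}
    (hf : HasDerivWithinAt f f' s x) (hg : HasDerivWithinAt g g' s x) :
    HasDerivWithinAt (fun t => f t * g t) (f' * g x + f x * g') s x := by
  exact ((mulLinearMap 𝕜).toContinuousBilinearMap.hasDerivWithinAt_of_bilinear hf hg).congr_deriv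
    (add_comm _ _)

theorem HasDerivWithinAt.matrix_transpose {f : 𝕜 → Matrix l m 𝕜} {f' : Matrix l m 𝕜}
    (hf : HasDerivWithinAt f f' s x) :
    HasDerivWithinAt (fun t => (f t)ᵀ) f'ᵀ s x :=
  (transposeLinearEquiv l m 𝕜 𝕜).toContinuousLinearEquiv.hasFDerivAt.comp_hasDerivWithinAt x hf

end MatrixCalculus

theorem eq_exp_mul_smul_of_hasDerivWithinAt_Ici {E : Type*} [NormedAddCommGroup E]
    [NormedSpace ℝ E] {f : ℝ → E} {c : ℝ}
    (hf : ∀ t, 0 ≤ t → HasDerivWithinAt f (c • f t) (Ici 0) t) {t : ℝ} (ht : 0 ≤ t) :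
    f t = Real.exp (c * t) • f 0 := by
  set g : ℝ → E := fun t => Real.exp (-c * t) • f t
  have hg : ∀ t, 0 ≤ t → HasDerivWithinAt g 0 (Ici 0) t := fun t ht => by
    have hexp : HasDerivWithinAt (fun t => Real.exp (-c * t)) (Real.exp (-c * t) * -c)
        (Ici 0) t := by
      simpa using ((hasDerivAt_id t).const_mul (-c)).exp.hasDerivWithinAt
    refine (hexp.smul (hf t ht)).congr_deriv ?_
    rw [smul_smul]; module
  have hconst := constant_of_has_deriv_right_zero (f := g) (a := 0) (b := t)
    (fun y hy => (hg y hy.1).continuousWithinAt.mono Icc_subset_Ici_self)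
    (fun y hy => (hg y hy.1).mono (Ici_subset_Ici.mpr hy.1)) t ⟨ht, le_rfl⟩
  simp only [g, mul_zero, Real.exp_zero, one_smul] at hconst
  rw [← hconst, smul_smul, ← Real.exp_add]
  simp

def gramDefect {R m n : Type*} [Fintype m] [Fintype n] [CommRing R] (W : Matrix m n R)
    (M : Matrix m m R) : Matrix m m R :=
  W * Wᵀ - M * M

theorem synaptic_gramDefect_deriv {R m n : Type*} [Fintype m] [Fintype n] [DecidableEq m]
    [CommRing R]
    {A : Matrix n n R} (hA : Aᵀ = A) (W : Matrix m n R) {M : Matrix m m R} (hM : Mᵀ = M)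
    (hMdet : IsUnit M.det) :
    (2 : R) • (M⁻¹ * W * A - W) * Wᵀ + W * ((2 : R) • (M⁻¹ * W * A - W))ᵀ -
        ((2 : R) • (M⁻¹ * W * A * Wᵀ * M⁻¹ - M) * M +
          M * (2 : R) • (M⁻¹ * W * A * Wᵀ * M⁻¹ - M)) = (-4 : R) • gramDefect W M := by
  have hMinv : M⁻¹ᵀ = M⁻¹ := by rw [transpose_nonsing_inv, hM]
  have hMM : ∀ X : Matrix m m R, M * (M⁻¹ * X) = X := fun X => by
    rw [← Matrix.mul_assoc, mul_nonsing_inv _ hMdet, Matrix.one_mul]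
  simp only [gramDefect, transpose_smul, transpose_sub, transpose_mul, hA,
    hMinv, smul_mul, Matrix.mul_smul, Matrix.mul_sub, Matrix.sub_mul, Matrix.mul_assoc,
    nonsing_inv_mul _ hMdet, hMM, Matrix.mul_one]
  module

theorem IsSynSol.hasDerivWithinAt_gramDefect {k n : ℕ} {A : Matrix (Fin n) (Fin n) ℝ}
    {W : ℝ → Matrix (Fin k) (Fin n) ℝ} {M : ℝ → Matrix (Fin k) (Fin k) ℝ}
    (hsol : IsSynSol A (1 / 2 : ℝ) W M) (hA : Aᵀ = A) {t : ℝ} (ht : 0 ≤ t) :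
    HasDerivWithinAt (fun t => gramDefect (W t) (M t)) ((-4 : ℝ) • gramDefect (W t) (M t))
      (Ici 0) t := by
  obtain ⟨hM, hW', hM'⟩ := hsol t ht
  rw [one_div, inv_inv] at hM'
  exact ((hW'.matrix_mul hW'.matrix_transpose).sub (hM'.matrix_mul hM')).congr_deriv
    (synaptic_gramDefect_deriv hA (W t) (M := M t) hM.isHermitian.eq
      ((isUnit_iff_isUnit_det _).mp hM.isUnit))

theorem lyap_exponential_decay_general {k n : ℕ}
    (A : Matrix (Fin n) (Fin n) ℝ) (hA : A.PosDef)
    (W₀ : Matrix (Fin k) (Fin n) ℝ) (M₀ : Matrix (Fin k) (Fin k) ℝ)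
    (W : ℝ → Matrix (Fin k) (Fin n) ℝ) (M : ℝ → Matrix (Fin k) (Fin k) ℝ)
    (hsol : IsSynSol A (1/2 : ℝ) W M) (hW0 : W 0 = W₀) (hM0 : M 0 = M₀) :
    ∀ t : ℝ, 0 ≤ t → Lyap (W t) (M t) = Lyap W₀ M₀ * Real.exp (-8 * t) := by
  intro t ht
  have hdecay := eq_exp_mul_smul_of_hasDerivWithinAt_Ici
    (fun s hs => hsol.hasDerivWithinAt_gramDefect hA.isHermitian.eq hs) ht
  show ‖gramDefect (W t) (M t)‖ ^ 2 = ‖gramDefect W₀ M₀‖ ^ 2 * Real.exp (-8 * t)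
  rw [hdecay, hW0, hM0, norm_smul, Real.norm_of_nonneg (Real.exp_pos _).le, mul_pow,
    ← Real.exp_nat_mul]
  ring_nf

/-- Along any solution with `τ = 1/2`, `L(W(t), M(t)) = L(W₀, M₀)·e^{−8t}`. -/
theorem lyap_exponential_decay {k n : ℕ} (hk : 0 < k) (hkn : k < n)
    (A : Matrix (Fin n) (Fin n) ℝ) (hA : A.PosDef)
    (W₀ : Matrix (Fin k) (Fin n) ℝ) (M₀ : Matrix (Fin k) (Fin k) ℝ) (hM₀ : M₀.PosDef)
    (W : ℝ → Matrix (Fin k) (Fin n) ℝ) (M : ℝ → Matrix (Fin k) (Fin k) ℝ)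
    (hsol : IsSynSol A (1/2 : ℝ) W M) (hW0 : W 0 = W₀) (hM0 : M 0 = M₀) :
    ∀ t : ℝ, 0 ≤ t → Lyap (W t) (M t) = Lyap W₀ M₀ * Real.exp (-8 * t) :=
  lyap_exponential_decay_general A hA W₀ M₀ W M hsol hW0 hM0
end

section
/- The set N = {(W, M) : W is a real k×n matrix, M is a real symmetric positive definite k×k matrix, and there exist a nonzero vector v ∈ ℝ^k and λ > 0 such that Wᵀv = 0 and Mv = λv}, viewed as a subset of the finite-dimensional real vector space of pairs (W, M) with W a k×n matrix and M a symmetric k×k matrix, has Lebesgue measure zero. -/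
/-!
If `Wᵀ v = 0` for some `v ≠ 0`, then `det (W Wᵀ) = 0`. The map `W ↦ det (W Wᵀ)` is a polynomial
in the entries of `W`, and it is not the zero polynomial because `k ≤ n` (it equals `1` at
`W = [I 0]`). The zero set of a nonzero real polynomial is Lebesgue-null: by induction on the
number of variables and Fubini, almost every slice is the root set of a nonzero univariate
polynomial, hence finite. Finally, the projection `(W, M) ↦ W` is a surjective linear map, so
preimages of null sets are null for every Haar measure on the space of pairs.
-/

open Matrix MeasureTheory
open scoped Matrix

attribute [local instance] Matrix.frobeniusNormedAddCommGroup Matrix.frobeniusNormedSpace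

/-- The submodule of symmetric `k×k` real matrices. -/
def symMat (k : ℕ) : Submodule ℝ (Matrix (Fin k) (Fin k) ℝ) where
  carrier := {M | M.IsSymm}
  add_mem' := fun ha hb => ha.add hb
  zero_mem' := Matrix.isSymm_zero
  smul_mem' := fun c _ h => h.smul c

/-- The ambient finite-dimensional real vector space of pairs `(W, M)` with `W` a real
`k×n` matrix and `M` a real symmetric `k×k` matrix. -/
abbrev MatPairSpace (k n : ℕ) := Matrix (Fin k) (Fin n) ℝ × (symMat k)

noncomputable local instance (k n : ℕ) : MeasurableSpace (MatPairSpace k n) := borel _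
local instance (k n : ℕ) : BorelSpace (MatPairSpace k n) := ⟨rfl⟩

theorem MeasureTheory.ae_mem_of_ae_ae_cons_mem {α : Type*} [MeasureSpace α]
    [SigmaFinite (volume : Measure α)] {m : ℕ} {s : Set (Fin (m + 1) → α)} (hs : MeasurableSet s)
    (h : ∀ᵐ y : Fin m → α, ∀ᵐ a : α, Fin.cons a y ∈ s) : ∀ᵐ x : Fin (m + 1) → α, x ∈ s := by
  set e := MeasurableEquiv.piFinSuccAbove (fun _ : Fin (m + 1) => α) 0
  have he_symm : ∀ z, e.symm z = Fin.cons z.1 z.2 := fun z => by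
    simp only [e, MeasurableEquiv.piFinSuccAbove_symm_apply, Fin.insertNthEquiv_zero]; rfl
  have hprod : ∀ᵐ z : α × (Fin m → α), e.symm z ∈ s := by
    refine (Measure.ae_prod_iff_ae_ae (e.symm.measurable hs)).2 <|
      (Measure.ae_ae_comm (p := fun a y => e.symm (a, y) ∈ s) (e.symm.measurable hs)).2 ?_
    simpa only [he_symm] using h
  have he : MeasurePreserving e := volume_preserving_piFinSuccAbove _ 0
  filter_upwards [he.quasiMeasurePreserving.ae hprod] with x hx
  simpa only [MeasurableEquiv.symm_apply_apply] using hx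

namespace MvPolynomial

theorem measurableSet_setOf_eval_ne_zero {σ : Type*} [Fintype σ] (p : MvPolynomial σ ℝ) :
    MeasurableSet {x : σ → ℝ | eval x p ≠ 0} :=
  (isOpen_ne_fun (continuous_eval p) continuous_const).measurableSet

theorem ae_eval_ne_zero_fin : ∀ {m : ℕ} {p : MvPolynomial (Fin m) ℝ}, p ≠ 0 →
    ∀ᵐ x : Fin m → ℝ, eval x p ≠ 0
  | 0, p, hp => ae_of_all _ fun x => by
      rwa [eq_C_of_isEmpty p, eval_C, Ne, ← C_inj (σ := Fin 0), ← eq_C_of_isEmpty, map_zero]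
  | m + 1, p, hp => by
      set q := finSuccEquiv ℝ m p
      have hq : q.leadingCoeff ≠ 0 :=
        Polynomial.leadingCoeff_ne_zero.2 ((map_ne_zero_iff _ (finSuccEquiv ℝ m).injective).2 hp)
      refine ae_mem_of_ae_ae_cons_mem (measurableSet_setOf_eval_ne_zero p) ?_
      filter_upwards [ae_eval_ne_zero_fin hq] with y hy
      have hqy : q.map (eval y) ≠ 0 := fun h => hy <| by
        simpa using congrArg (Polynomial.coeff · q.natDegree) h
      filter_upwards [(Polynomial.finite_setOfPred_isRoot hqy).countable.ae_notMem volume] with a ha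
      show eval (Fin.cons a y) p ≠ 0
      rw [eval_eq_eval_mv_eval']
      exact ha

theorem ae_eval_ne_zero {σ : Type*} [Fintype σ] {p : MvPolynomial σ ℝ} (hp : p ≠ 0) :
    ∀ᵐ x : σ → ℝ, eval x p ≠ 0 := by
  set e := Fintype.equivFin σ
  have hp' : rename e p ≠ 0 := (map_ne_zero_iff _ (rename_injective e e.injective)).2 hp
  refine (ae_comp_linearMap_mem_iff (LinearMap.funLeft ℝ ℝ e) volume volume
    (LinearMap.funLeft_surjective_of_injective _ _ _ e.injective)
    (measurableSet_setOf_eval_ne_zero p)).1 ?_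
  simpa [LinearMap.funLeft, eval_rename] using ae_eval_ne_zero_fin hp'

end MvPolynomial

namespace Matrix

variable {m n R : Type*} [DecidableEq m] [Fintype n] [CommRing R]

theorem eval_det_mvPolynomialX_mul_transpose [Fintype m] (A : Matrix m n R) :
    MvPolynomial.eval (fun p : m × n => A p.1 p.2)
      (mvPolynomialX m n R * (mvPolynomialX m n R)ᵀ).det = (A * Aᵀ).det := by
  rw [RingHom.map_det, RingHom.mapMatrix_apply, Matrix.map_mul, transpose_map]
  congr 3 <;> exact mvPolynomialX_map_eval₂ (RingHom.id R) A

theorem submatrix_one_id_mul_transpose [DecidableEq n] {e : m → n} (he : Function.Injective e) :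
    (1 : Matrix n n R).submatrix e id * ((1 : Matrix n n R).submatrix e id)ᵀ = 1 := by
  rw [transpose_submatrix, transpose_one, ← submatrix_mul _ _ _ _ _ Function.bijective_id, one_mul,
    submatrix_one _ he]

theorem det_mvPolynomialX_mul_transpose_ne_zero [Fintype m] [Nontrivial R] (e : m ↪ n) :
    (mvPolynomialX m n R * (mvPolynomialX m n R)ᵀ).det ≠ 0 := by
  classical
  intro h
  have := eval_det_mvPolynomialX_mul_transpose ((1 : Matrix n n R).submatrix e id)
  rw [h, map_zero, submatrix_one_id_mul_transpose e.injective, det_one] at this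
  exact zero_ne_one this

end Matrix

/-- The Borel structure of `MatPairSpace` and the Haar property of `μ` refer to the product of the
entrywise topologies, which agrees with the Frobenius-norm topology only after unfolding
definitions; this is why the instances are passed by hand. -/
theorem MatPairSpace.ae_comp_linearMap_mem_iff {k n : ℕ} (μ : Measure (MatPairSpace k n))
    [μ.IsAddHaarMeasure] {F : Type*} [NormedAddCommGroup F] [NormedSpace ℝ F] [MeasurableSpace F]
    [BorelSpace F] (ν : Measure F) [ν.IsAddHaarMeasure] (L : MatPairSpace k n →ₗ[ℝ] F)
    (hL : Function.Surjective L) {s : Set F} (hs : MeasurableSet s) :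
    (∀ᵐ x ∂μ, L x ∈ s) ↔ ∀ᵐ y ∂ν, y ∈ s := by
  have : ProperSpace (MatPairSpace k n) := FiniteDimensional.proper_real _
  exact @_root_.MeasureTheory.ae_comp_linearMap_mem_iff ℝ _ _ _ _ _ _
    (by exact inferInstanceAs (BorelSpace (MatPairSpace k n))) _ _ _ _ _ L μ ν
    (by exact ‹μ.IsAddHaarMeasure›) _ _ hL _ hs

theorem excSet_measure_zero_general {k n : ℕ} (hkn : k < n)
    (μ : Measure (MatPairSpace k n)) [μ.IsAddHaarMeasure] :
    μ {p : MatPairSpace k n |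
        (p.2 : Matrix (Fin k) (Fin k) ℝ).PosDef ∧
        ∃ v : Fin k → ℝ, v ≠ 0 ∧ ∃ lam : ℝ, 0 < lam ∧
          (p.1)ᵀ.mulVec v = 0 ∧
          (p.2 : Matrix (Fin k) (Fin k) ℝ).mulVec v = lam • v} = 0 := by
  let L : MatPairSpace k n →ₗ[ℝ] (Fin k × Fin n → ℝ) :=
    { toFun p ij := p.1 ij.1 ij.2
      map_add' _ _ := rfl
      map_smul' _ _ := rfl }
  have hL : Function.Surjective L := fun x => ⟨(of fun i j => x (i, j), 0), rfl⟩
  have hgram : ∀ᵐ p ∂μ, (p.1 * p.1ᵀ).det ≠ 0 := by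
    have hq := det_mvPolynomialX_mul_transpose_ne_zero (R := ℝ) (Fin.castLEEmb hkn.le)
    filter_upwards [(MatPairSpace.ae_comp_linearMap_mem_iff μ volume L hL
      (MvPolynomial.measurableSet_setOf_eval_ne_zero _)).2
        (MvPolynomial.ae_eval_ne_zero hq)] with p hp
    rw [← eval_det_mvPolynomialX_mul_transpose]
    exact hp
  refine measure_mono_null (fun p ⟨_, v, hv, _, _, hWv, _⟩ => ?_) (ae_iff.1 hgram)
  simpa using exists_mulVec_eq_zero_iff.1 ⟨v, hv, by rw [← mulVec_mulVec, hWv, mulVec_zero]⟩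

/-- The set `N` — pairs `(W, M)` with `M` symmetric positive definite admitting a nonzero
vector `v` and `λ > 0` such that `Wᵀv = 0` and `Mv = λv` — has Lebesgue (additive Haar)
measure zero in the space of pairs `(W, M)` with `M` symmetric. -/
theorem excSet_measure_zero {k n : ℕ} (hk : 0 < k) (hkn : k < n)
    (μ : Measure (MatPairSpace k n)) [μ.IsAddHaarMeasure] :
    μ {p : MatPairSpace k n |
        (p.2 : Matrix (Fin k) (Fin k) ℝ).PosDef ∧
        ∃ v : Fin k → ℝ, v ≠ 0 ∧ ∃ lam : ℝ, 0 < lam ∧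
          (p.1)ᵀ.mulVec v = 0 ∧
          (p.2 : Matrix (Fin k) (Fin k) ℝ).mulVec v = lam • v} = 0 :=
  excSet_measure_zero_general hkn μ
end

section
/- A pair (W, M) ∈ D is an equilibrium point of the synaptic ODE (i.e., M⁻¹WA = W and M⁻¹WAWᵀM⁻¹ = M) if and only if there exist a k×k real orthogonal matrix U, an n×k real matrix V whose columns are orthonormal eigenvectors of A, and a k×k diagonal matrix S whose i-th diagonal entry is the eigenvalue of A corresponding to the i-th column of V, such that W = U S Vᵀ and M = U S Uᵀ. -/
open Matrix
open scoped Matrix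

/-!
Clearing `M⁻¹`, the equilibrium equations become `W A = M W` and `W Wᵀ = M²`. Diagonalise
`M = U S Uᵀ` and put `V = Wᵀ U S⁻¹`: then `Vᵀ V = S⁻¹ Uᵀ M² U S⁻¹ = 1`, and `A Wᵀ = Wᵀ M` makes
the columns of `V` eigenvectors of `A` with eigenvalues `S`. Conversely, the entries of `S` are
the Rayleigh quotients `vᵢᵀ A vᵢ > 0`, so `U S Uᵀ` is positive definite, and both equations are
direct computations.
-/

/-- An equilibrium point of the synaptic ODE: a pair `(W, M)` with `M` symmetric positive
definite satisfying `M⁻¹WA = W` and `M⁻¹WAWᵀM⁻¹ = M`. -/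
def IsEquilibrium {k n : ℕ} (A : Matrix (Fin n) (Fin n) ℝ)
    (W : Matrix (Fin k) (Fin n) ℝ) (M : Matrix (Fin k) (Fin k) ℝ) : Prop :=
  M.PosDef ∧ M⁻¹ * W * A = W ∧ M⁻¹ * W * A * Wᵀ * M⁻¹ = M

namespace Matrix

section Semiring

variable {l m o α : Type*} [Fintype l] [Fintype m] [DecidableEq l] [Semiring α]

theorem mul_mul_cancel_left_of_mul_eq_one {P : Matrix l m α} {Q : Matrix m l α}
    (h : P * Q = 1) (X : Matrix l o α) : P * (Q * X) = X := by
  rw [← Matrix.mul_assoc, h, Matrix.one_mul]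

end Semiring

section Field

variable {m K : Type*} [Fintype m] [DecidableEq m] [Field K]

theorem diagonal_mul_diagonal_inv {s : m → K} (hs : ∀ i, s i ≠ 0) :
    diagonal s * diagonal s⁻¹ = 1 := by
  rw [diagonal_mul_diagonal, ← diagonal_one]
  exact congrArg diagonal (funext fun i => mul_inv_cancel₀ (hs i))

theorem diagonal_inv_mul_diagonal {s : m → K} (hs : ∀ i, s i ≠ 0) :
    diagonal s⁻¹ * diagonal s = 1 := by
  rw [diagonal_mul_diagonal, ← diagonal_one]
  exact congrArg diagonal (funext fun i => inv_mul_cancel₀ (hs i))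

end Field

section Real

variable {m : Type*} [Fintype m] [DecidableEq m]

theorem PosDef.exists_orthogonal_diagonal {M : Matrix m m ℝ} (hM : M.PosDef) :
    ∃ (U : Matrix m m ℝ) (s : m → ℝ), Uᵀ * U = 1 ∧ U * Uᵀ = 1 ∧ (∀ i, 0 < s i) ∧
      M = U * diagonal s * Uᵀ := by
  let U : Matrix m m ℝ := (hM.1.eigenvectorUnitary : Matrix m m ℝ)
  have hUt : star U = Uᵀ := conjTranspose_eq_transpose_of_trivial U
  refine ⟨U, hM.1.eigenvalues, ?_, ?_, hM.eigenvalues_pos, ?_⟩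
  · rw [← hUt]; exact Unitary.coe_star_mul_self _
  · rw [← hUt]; exact Unitary.coe_mul_star_self _
  · rw [← hUt]; simpa [Unitary.conjStarAlgAut_apply] using hM.1.spectral_theorem

end Real

end Matrix

section

variable {m n : Type*} [Fintype m] [Fintype n] [DecidableEq m]

theorem exists_svd_of_mul_eq {A : Matrix n n ℝ} (hA : Aᵀ = A) {W : Matrix m n ℝ}
    {U : Matrix m m ℝ} (hUtU : Uᵀ * U = 1) (hUUt : U * Uᵀ = 1)
    {s : m → ℝ} (hs : ∀ i, s i ≠ 0)
    {M : Matrix m m ℝ} (hM : M = U * diagonal s * Uᵀ) (hWA : W * A = M * W)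
    (hWW : W * Wᵀ = M * M) :
    ∃ V : Matrix n m ℝ, Vᵀ * V = 1 ∧ A * V = V * diagonal s ∧ W = U * diagonal s * Vᵀ := by
  subst hM
  have hDE := diagonal_mul_diagonal_inv hs
  have hED := diagonal_inv_mul_diagonal hs
  refine ⟨Wᵀ * U * diagonal s⁻¹, ?_, ?_, ?_⟩
  · calc (Wᵀ * U * diagonal s⁻¹)ᵀ * (Wᵀ * U * diagonal s⁻¹)
        = diagonal s⁻¹ * Uᵀ * (W * Wᵀ) * U * diagonal s⁻¹ := by
          simp only [transpose_mul, diagonal_transpose, transpose_transpose, Matrix.mul_assoc]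
      _ = diagonal s⁻¹ * (Uᵀ * U) * diagonal s * (Uᵀ * U) * diagonal s * (Uᵀ * U)
            * diagonal s⁻¹ := by
          rw [hWW]; simp only [Matrix.mul_assoc]
      _ = 1 := by
          rw [hUtU, Matrix.mul_one, Matrix.mul_one, Matrix.mul_one, hED, Matrix.one_mul, hDE]
  · calc A * (Wᵀ * U * diagonal s⁻¹) = (W * A)ᵀ * U * diagonal s⁻¹ := by
          rw [transpose_mul, hA]; simp only [Matrix.mul_assoc]
      _ = Wᵀ * U * diagonal s * (Uᵀ * U) * diagonal s⁻¹ := by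
          rw [hWA]
          simp only [transpose_mul, diagonal_transpose, transpose_transpose, Matrix.mul_assoc]
      _ = Wᵀ * U * diagonal s⁻¹ * diagonal s := by
          rw [hUtU, Matrix.mul_one, Matrix.mul_assoc (Wᵀ * U), hDE, Matrix.mul_assoc (Wᵀ * U), hED]
  · calc W = U * (diagonal s * diagonal s⁻¹) * Uᵀ * W := by
          rw [hDE, Matrix.mul_one, hUUt, Matrix.one_mul]
      _ = U * diagonal s * (Wᵀ * U * diagonal s⁻¹)ᵀ := by
          simp only [transpose_mul, diagonal_transpose, transpose_transpose, Matrix.mul_assoc]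

theorem pos_of_orthonormal_eigenvectors {A : Matrix n n ℝ} (hA : A.PosDef)
    {V : Matrix n m ℝ} (hV : Vᵀ * V = 1) {s : m → ℝ} (hAV : A * V = V * diagonal s) (i : m) :
    0 < s i := by
  have hVinj : Function.Injective V.mulVec := fun x y hxy => by
    simpa only [mulVec_mulVec, hV, one_mulVec] using congrArg (Vᵀ *ᵥ ·) hxy
  have hD : diagonal s = Vᴴ * A * V := by
    rw [conjTranspose_eq_transpose_of_trivial, Matrix.mul_assoc, hAV, ← Matrix.mul_assoc, hV,
      Matrix.one_mul]
  exact posDef_diagonal_iff.mp (hD ▸ hA.conjTranspose_mul_mul_same hVinj) i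

theorem posDef_mul_diagonal_mul_transpose {U : Matrix m m ℝ} (hU : Uᵀ * U = 1) {s : m → ℝ}
    (hs : ∀ i, 0 < s i) : (U * diagonal s * Uᵀ).PosDef := by
  have hUunit : IsUnit U := (isUnit_iff_isUnit_det U).mpr (isUnit_det_of_left_inverse hU)
  rw [← conjTranspose_eq_transpose_of_trivial, ← star_eq_conjTranspose,
    hUunit.posDef_star_right_conjugate_iff]
  exact PosDef.diagonal hs

theorem mul_eq_of_svd {A : Matrix n n ℝ} (hA : Aᵀ = A) {U : Matrix m m ℝ} (hU : Uᵀ * U = 1)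
    {V : Matrix n m ℝ} (hV : Vᵀ * V = 1) {s : m → ℝ} (hAV : A * V = V * diagonal s)
    {W : Matrix m n ℝ} (hW : W = U * diagonal s * Vᵀ)
    {M : Matrix m m ℝ} (hM : M = U * diagonal s * Uᵀ) :
    W * A = M * W ∧ W * Wᵀ = M * M := by
  subst hW hM
  have hVtA : Vᵀ * A = diagonal s * Vᵀ := by
    simpa only [transpose_mul, hA, diagonal_transpose] using congrArg transpose hAV
  constructor
  · simp only [Matrix.mul_assoc, hVtA, mul_mul_cancel_left_of_mul_eq_one hU]
  · simp only [transpose_mul, diagonal_transpose, transpose_transpose, Matrix.mul_assoc,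
      mul_mul_cancel_left_of_mul_eq_one hU, mul_mul_cancel_left_of_mul_eq_one hV]

end

theorem isEquilibrium_iff {k n : ℕ} {A : Matrix (Fin n) (Fin n) ℝ}
    {W : Matrix (Fin k) (Fin n) ℝ} {M : Matrix (Fin k) (Fin k) ℝ} :
    IsEquilibrium A W M ↔ M.PosDef ∧ W * A = M * W ∧ W * Wᵀ = M * M := by
  refine and_congr_right fun hM => ?_
  have : Invertible M := hM.isUnit.invertible
  rw [Matrix.mul_assoc M⁻¹ W A, inv_mul_eq_iff_eq_mul_of_invertible]
  refine and_congr_right fun hWA => ?_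
  rw [hWA, inv_mul_cancel_left_of_invertible, mul_inv_eq_iff_eq_mul_of_invertible]

theorem isEquilibrium_iff_svd_general {k n : ℕ}
    (A : Matrix (Fin n) (Fin n) ℝ) (hA : A.PosDef)
    (W : Matrix (Fin k) (Fin n) ℝ) (M : Matrix (Fin k) (Fin k) ℝ) :
    IsEquilibrium A W M ↔
      ∃ (U : Matrix (Fin k) (Fin k) ℝ) (s : Fin k → ℝ) (V : Matrix (Fin n) (Fin k) ℝ),
        Uᵀ * U = 1 ∧ U * Uᵀ = 1 ∧
        Vᵀ * V = 1 ∧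
        A * V = V * Matrix.diagonal s ∧
        W = U * Matrix.diagonal s * Vᵀ ∧
        M = U * Matrix.diagonal s * Uᵀ := by
  have hAt : Aᵀ = A := hA.isHermitian
  rw [isEquilibrium_iff]
  constructor
  · rintro ⟨hM, hWA, hWW⟩
    obtain ⟨U, s, hUtU, hUUt, hs, hMU⟩ := hM.exists_orthogonal_diagonal
    obtain ⟨V, hV, hAV, hW⟩ :=
      exists_svd_of_mul_eq hAt hUtU hUUt (fun i => (hs i).ne') hMU hWA hWW
    exact ⟨U, s, V, hUtU, hUUt, hV, hAV, hW, hMU⟩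
  · rintro ⟨U, s, V, hUtU, -, hV, hAV, hW, hMU⟩
    have hs := pos_of_orthonormal_eigenvectors hA hV hAV
    exact ⟨hMU ▸ posDef_mul_diagonal_mul_transpose hUtU hs, mul_eq_of_svd hAt hUtU hV hAV hW hMU⟩

/-- Characterization of equilibrium points: `(W, M) ∈ D` is an equilibrium point iff
`W = U S Vᵀ` and `M = U S Uᵀ` where `U` is `k×k` orthogonal, the columns of the `n×k`
matrix `V` are orthonormal eigenvectors of `A` (encoded by `Vᵀ V = I` and
`A V = V diagonal s`), and `S = diagonal s` holds the corresponding eigenvalues. -/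
theorem isEquilibrium_iff_svd {k n : ℕ} (hk : 0 < k) (hkn : k < n)
    (A : Matrix (Fin n) (Fin n) ℝ) (hA : A.PosDef)
    (W : Matrix (Fin k) (Fin n) ℝ) (M : Matrix (Fin k) (Fin k) ℝ) :
    IsEquilibrium A W M ↔
      ∃ (U : Matrix (Fin k) (Fin k) ℝ) (s : Fin k → ℝ) (V : Matrix (Fin n) (Fin k) ℝ),
        Uᵀ * U = 1 ∧ U * Uᵀ = 1 ∧
        Vᵀ * V = 1 ∧
        A * V = V * Matrix.diagonal s ∧
        W = U * Matrix.diagonal s * Vᵀ ∧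
        M = U * Matrix.diagonal s * Uᵀ :=
  isEquilibrium_iff_svd_general A hA W M
end

section
/- If (W, M) ∈ D is an equilibrium point of the synaptic ODE and Q is any k×k real orthogonal matrix, then (QW, QMQᵀ) is also an equilibrium point of the synaptic ODE. -/
open Matrix
open scoped Matrix

namespace Matrix

variable {m l R : Type*} [Fintype m] [DecidableEq m] [CommRing R] {Q : Matrix m m R}

theorem transpose_mul_mul_cancel_left (hQ : Qᵀ * Q = 1) (X : Matrix m l R) :
    Qᵀ * (Q * X) = X := by
  rw [← Matrix.mul_assoc, hQ, Matrix.one_mul]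

theorem inv_mul_mul_transpose (hQ : Qᵀ * Q = 1) (M : Matrix m m R) :
    (Q * M * Qᵀ)⁻¹ = Q * M⁻¹ * Qᵀ := by
  rw [mul_inv_rev, mul_inv_rev, ← transpose_nonsing_inv, inv_eq_left_inv hQ,
    transpose_transpose, Matrix.mul_assoc]

variable [Fintype l]

theorem inv_mul_mul_transpose_mul_mul (hQ : Qᵀ * Q = 1) (M : Matrix m m R)
    (W : Matrix m l R) (A : Matrix l l R) :
    (Q * M * Qᵀ)⁻¹ * (Q * W) * A = Q * (M⁻¹ * W * A) := by
  rw [inv_mul_mul_transpose hQ]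
  simp only [Matrix.mul_assoc, transpose_mul_mul_cancel_left hQ]

theorem inv_mul_mul_transpose_mul_mul_mul_transpose_mul (hQ : Qᵀ * Q = 1) (M : Matrix m m R)
    (W : Matrix m l R) (A : Matrix l l R) :
    (Q * M * Qᵀ)⁻¹ * (Q * W) * A * (Q * W)ᵀ * (Q * M * Qᵀ)⁻¹ =
      Q * (M⁻¹ * W * A * Wᵀ * M⁻¹) * Qᵀ := by
  rw [inv_mul_mul_transpose hQ, transpose_mul]
  simp only [Matrix.mul_assoc, transpose_mul_mul_cancel_left hQ]

end Matrix

theorem Matrix.PosDef.mul_mul_transpose_of_transpose_mul_self {m : Type*} [Fintype m]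
    [DecidableEq m] {M Q : Matrix m m ℝ} (hM : M.PosDef) (hQ : Qᵀ * Q = 1) :
    (Q * M * Qᵀ).PosDef := by
  simpa only [conjTranspose_eq_transpose_of_trivial] using
    hM.mul_mul_conjTranspose_same (vecMul_injective_of_isUnit (.of_mul_eq_one_right Qᵀ hQ))

theorem isEquilibrium_orthogonal_conj_general {k n : ℕ}
    (A : Matrix (Fin n) (Fin n) ℝ)
    (W : Matrix (Fin k) (Fin n) ℝ) (M : Matrix (Fin k) (Fin k) ℝ)
    (hWM : IsEquilibrium A W M)
    (Q : Matrix (Fin k) (Fin k) ℝ) (hQ : Qᵀ * Q = 1) :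
    IsEquilibrium A (Q * W) (Q * M * Qᵀ) := by
  obtain ⟨hM, hW, hM'⟩ := hWM
  refine ⟨hM.mul_mul_transpose_of_transpose_mul_self hQ, ?_, ?_⟩
  · rw [inv_mul_mul_transpose_mul_mul hQ, hW]
  · rw [inv_mul_mul_transpose_mul_mul_mul_transpose_mul hQ, hM']

/-- If `(W, M)` is an equilibrium point and `Q` is orthogonal, then `(QW, QMQᵀ)` is also
an equilibrium point. -/
theorem isEquilibrium_orthogonal_conj {k n : ℕ} (hk : 0 < k) (hkn : k < n)
    (A : Matrix (Fin n) (Fin n) ℝ) (hA : A.PosDef)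
    (W : Matrix (Fin k) (Fin n) ℝ) (M : Matrix (Fin k) (Fin k) ℝ)
    (hWM : IsEquilibrium A W M)
    (Q : Matrix (Fin k) (Fin k) ℝ) (hQ : Qᵀ * Q = 1) (hQ' : Q * Qᵀ = 1) :
    IsEquilibrium A (Q * W) (Q * M * Qᵀ) :=
  isEquilibrium_orthogonal_conj_general A W M hWM Q hQ
end

section
/- If (W, M) ∈ D is an equilibrium point of the synaptic ODE, then M³ = W A Wᵀ, the matrix W has full rank k, and the neural filter matrix F = M⁻¹W satisfies F Fᵀ = I_k (i.e., the rows of F are orthonormal). -/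
open Matrix
open scoped Matrix

/-- At any equilibrium point `(W, M)`: `M³ = WAWᵀ`, `W` has full rank `k`, and the neural
filter matrix `F = M⁻¹W` has orthonormal rows, i.e. `F Fᵀ = I`. -/
theorem equilibrium_properties {k n : ℕ} (hk : 0 < k) (hkn : k < n)
    (A : Matrix (Fin n) (Fin n) ℝ) (hA : A.PosDef)
    (W : Matrix (Fin k) (Fin n) ℝ) (M : Matrix (Fin k) (Fin k) ℝ)
    (hWM : IsEquilibrium A W M) :
    M ^ 3 = W * A * Wᵀ ∧ W.rank = k ∧
    (M⁻¹ * W) * (M⁻¹ * W)ᵀ = 1 := by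
  obtain ⟨hM, h1, h2⟩ := hWM
  have hdet : IsUnit M.det := isUnit_iff_ne_zero.2 hM.det_pos.ne'
  have hMM : M * M⁻¹ = 1 := mul_nonsing_inv M hdet
  have hMM' : M⁻¹ * M = 1 := nonsing_inv_mul M hdet
  have hWA : W * A = M * W := by
    have := congrArg (fun X => M * X) h1
    simpa [Matrix.mul_assoc, ← Matrix.mul_assoc M M⁻¹, hMM] using this
  have hWWT : W * Wᵀ = M * M := by
    have h2' : M⁻¹ * (W * A) * Wᵀ * M⁻¹ = M := by
      simpa [Matrix.mul_assoc] using h2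
    rw [hWA, ← Matrix.mul_assoc, hMM'] at h2'
    have := congrArg (fun X => X * M) h2'
    simpa [Matrix.mul_assoc, hMM'] using this
  have hcube : M ^ 3 = W * A * Wᵀ := by
    rw [hWA, Matrix.mul_assoc, hWWT]
    rw [pow_succ, pow_two, Matrix.mul_assoc]
  refine ⟨hcube, ?_, ?_⟩
  · have h1 : W.rank = (W * Wᵀ).rank := (Matrix.rank_self_mul_transpose W).symm
    rw [h1, hWWT, Matrix.rank_of_isUnit]
    · simp
    · exact (isUnit_iff_isUnit_det _).2 (by simpa using hdet.mul hdet)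
  · have hMinvT : (M⁻¹)ᵀ = M⁻¹ := by
      have hsym : Mᵀ = M := by simpa using hM.1.eq
      rw [Matrix.transpose_nonsing_inv, hsym]
    calc (M⁻¹ * W) * (M⁻¹ * W)ᵀ = M⁻¹ * (W * Wᵀ) * M⁻¹ := by
          rw [Matrix.transpose_mul, hMinvT]; simp [Matrix.mul_assoc]
      _ = 1 := by rw [hWWT, ← Matrix.mul_assoc, hMM', Matrix.one_mul, hMM]
end

section
/- For every real k×n matrix W of full rank k, the potential V(W) = tr[−(WWᵀ)^{−1/2} W A Wᵀ + (1/2)WWᵀ] satisfies V(W) ≥ −(k/2)·σ_max(A)², where σ_max(A) denotes the largest eigenvalue of A and (WWᵀ)^{1/2} is the unique symmetric positive definite square root of WWᵀ. -/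
/-!
Let `B = (WWᵀ)^{1/2}` and `σ = σ_max(A)`. Since `A ≤ σ • 1`, conjugating by `W` gives
`WAWᵀ ≤ σ • B²`, and pairing with the positive matrix `B⁻¹` yields `tr(B⁻¹WAWᵀ) ≤ σ tr B`.
Hence `V(W) ≥ tr(B²)/2 - σ tr B = tr((B - σ • 1)²)/2 - kσ²/2 ≥ -kσ²/2`.
-/

open Matrix
open scoped Matrix Classical

/-- The unique symmetric positive semidefinite square root of a positive semidefinite real
matrix (junk value `0` on matrices that are not positive semidefinite). -/
noncomputable def msqrt {k : ℕ} (S : Matrix (Fin k) (Fin k) ℝ) : Matrix (Fin k) (Fin k) ℝ :=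
  if h : S.PosSemidef then
    h.1.eigenvectorUnitary.1 * diagonal ((↑) ∘ (√·) ∘ h.1.eigenvalues) *
      (star h.1.eigenvectorUnitary : Matrix (Fin k) (Fin k) ℝ)
  else 0

open scoped MatrixOrder

namespace Matrix

open scoped ComplexOrder

variable {m n 𝕜 : Type*} [Fintype m] [Fintype n] [RCLike 𝕜]

lemma PosSemidef.trace_mul_nonneg [DecidableEq m] {P Q : Matrix m m 𝕜} (hP : P.PosSemidef)
    (hQ : Q.PosSemidef) : 0 ≤ (P * Q).trace := by
  obtain ⟨C, rfl⟩ := CStarAlgebra.nonneg_iff_eq_star_mul_self.mp hQ.nonneg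
  rw [← mul_assoc, trace_mul_cycle]
  exact (hP.mul_mul_conjTranspose_same C).trace_nonneg

lemma PosSemidef.trace_mul_le_trace_mul [DecidableEq m] {P M N : Matrix m m 𝕜}
    (hP : P.PosSemidef) (hMN : (N - M).PosSemidef) : (P * M).trace ≤ (P * N).trace := by
  simpa [mul_sub, trace_sub] using hP.trace_mul_nonneg hMN

lemma IsHermitian.posSemidef_smul_one_sub [DecidableEq m] {A : Matrix m m 𝕜}
    (hA : A.IsHermitian) {σ : ℝ} (hσ : ∀ i, hA.eigenvalues i ≤ σ) : (σ • 1 - A).PosSemidef := by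
  have : A ≤ algebraMap ℝ _ σ := le_algebraMap_of_spectrum_le (by
    rw [hA.spectrum_real_eq_range_eigenvalues]
    rintro _ ⟨i, rfl⟩
    exact hσ i) hA.isSelfAdjoint
  rwa [le_iff, Algebra.algebraMap_eq_smul_one] at this

lemma linearIndependent_row_of_rank_eq {K : Type*} [Field K] {W : Matrix m n K}
    (hW : W.rank = Fintype.card m) : LinearIndependent K W.row := by
  rw [linearIndependent_iff_card_eq_finrank_span, ← hW, rank_eq_finrank_span_row, Set.finrank]

lemma posDef_mul_conjTranspose_self_of_rank_eq {W : Matrix m n 𝕜}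
    (hW : W.rank = Fintype.card m) : (W * Wᴴ).PosDef :=
  .mul_conjTranspose_self W (vecMul_injective_iff.mpr (linearIndependent_row_of_rank_eq hW))

lemma IsHermitian.two_mul_trace_le {B : Matrix m m ℝ} (hB : B.IsHermitian) (σ : ℝ) :
    2 * σ * B.trace ≤ (B * B).trace + Fintype.card m * σ ^ 2 := by
  have h : 0 ≤ ((B - σ • 1)ᴴ * (B - σ • 1)).trace :=
    (posSemidef_conjTranspose_mul_self _).trace_nonneg
  simp only [conjTranspose_sub, hB.eq, conjTranspose_smul, conjTranspose_one, star_trivial,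
    Matrix.sub_mul, Matrix.mul_sub, Matrix.smul_mul, Matrix.mul_smul, one_mul, mul_one,
    trace_sub, trace_smul, trace_one, smul_eq_mul] at h
  nlinarith

end Matrix

lemma msqrt_eq_cfcSqrt {k : ℕ} {S : Matrix (Fin k) (Fin k) ℝ} (hS : S.PosSemidef) :
    msqrt S = CFC.sqrt S := by
  rw [msqrt, dif_pos hS, CFC.sqrt_eq_real_sqrt S hS.nonneg, cfcₙ_eq_cfc, hS.1.cfc_eq,
    IsHermitian.cfc, Unitary.conjStarAlgAut_apply]
  rfl

theorem potential_bounded_below_general {k n : ℕ}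
    (A : Matrix (Fin n) (Fin n) ℝ) (hA : A.PosDef)
    (W : Matrix (Fin k) (Fin n) ℝ) (hW : W.rank = k) :
    Matrix.trace (-((msqrt (W * Wᵀ))⁻¹ * (W * A * Wᵀ)) + (2⁻¹ : ℝ) • (W * Wᵀ)) ≥
      -(k / 2 : ℝ) * (⨆ i : Fin n, hA.isHermitian.eigenvalues i) ^ 2 := by
  set σ := ⨆ i : Fin n, hA.isHermitian.eigenvalues i
  set S := W * Wᵀ
  have hS : S.PosDef := by
    simpa using posDef_mul_conjTranspose_self_of_rank_eq (W := W) (by simpa using hW)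
  set B := msqrt S
  have hB_eq : B = CFC.sqrt S := msqrt_eq_cfcSqrt hS.posSemidef
  have hB : B.PosSemidef := hB_eq ▸ (CFC.sqrt_nonneg S).posSemidef
  have hBB : B * B = S := hB_eq ▸ CFC.sqrt_mul_sqrt_self S hS.posSemidef.nonneg
  have hB_inv_mul : B⁻¹ * S = B := by
    rw [← hBB, nonsing_inv_mul_cancel_left _ _ ((isUnit_iff_isUnit_det _).mp
      (isUnit_of_mul_isUnit_left (hBB ▸ hS.isUnit)))]
  have hWAW : (σ • S - W * A * Wᵀ).PosSemidef := by
    simpa [Matrix.mul_sub, Matrix.sub_mul] using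
      (hA.isHermitian.posSemidef_smul_one_sub fun i ↦
        le_ciSup (Set.finite_range _).bddAbove i).mul_mul_conjTranspose_same W
  have h_cross : (B⁻¹ * (W * A * Wᵀ)).trace ≤ σ * B.trace := by
    simpa [hB_inv_mul] using hB.inv.trace_mul_le_trace_mul hWAW
  have h_square := hB.isHermitian.two_mul_trace_le σ
  rw [hBB, Fintype.card_fin] at h_square
  rw [trace_add, trace_neg, trace_smul, smul_eq_mul]
  linarith

/-- The potential `V(W) = tr[−(WWᵀ)^{−1/2}·WAWᵀ + (1/2)·WWᵀ]` is bounded below by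
`−(k/2)·σ_max(A)²`, where `σ_max(A)` is the largest eigenvalue of `A`. -/
theorem potential_bounded_below {k n : ℕ} (hk : 0 < k) (hkn : k < n)
    (A : Matrix (Fin n) (Fin n) ℝ) (hA : A.PosDef)
    (W : Matrix (Fin k) (Fin n) ℝ) (hW : W.rank = k) :
    Matrix.trace (-((msqrt (W * Wᵀ))⁻¹ * (W * A * Wᵀ)) + (2⁻¹ : ℝ) • (W * Wᵀ)) ≥
      -(k / 2 : ℝ) * (⨆ i : Fin n, hA.isHermitian.eigenvalues i) ^ 2 :=
  potential_bounded_below_general A hA W hW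
end

section
/- Let τ > 0 and let (W(t), M(t)) be a solution of the synaptic ODE with timescale τ and initial condition (W₀, M₀) ∈ D. Let m = σ_min(M₀) denote the smallest eigenvalue of M₀. Then for every t ≥ 0 and every unit vector v ∈ ℝ^k, vᵀM(t)v ≥ m·e^{−t/τ}; consequently the smallest eigenvalue of M(t) satisfies σ_min(M(t)) ≥ m·e^{−t/τ}, and ‖M(t)⁻¹‖ ≤ (√k / m)·e^{t/τ}. -/
/-!
Along a solution, `q(t) = vᵀ M(t) v` satisfies `τ q' = vᵀ M⁻¹ W A Wᵀ M⁻¹ v - q ≥ -q`, the drive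
term being a congruence of the positive semidefinite `A`. Hence `e^{t/τ} q(t)` is nondecreasing
and `q(t) ≥ m |v|² e^{-t/τ}`. This coercivity bound `vᵀ M v ≥ c |v|²` controls every eigenvalue
(a Rayleigh quotient of a unit eigenvector) and gives `|M x| ≥ c |x|`, so each column of `M⁻¹`
has Euclidean norm at most `1/c`, whence `‖M⁻¹‖_F ≤ √k / c`.
-/

open Matrix Filter
open scoped Matrix

attribute [local instance] Matrix.frobeniusNormedAddCommGroup Matrix.frobeniusNormedSpace

namespace Matrix

variable {ι : Type*} [Fintype ι]

lemma dotProduct_self_eq_norm_sq (x : ι → ℝ) : x ⬝ᵥ x = ‖WithLp.toLp 2 x‖ ^ 2 := by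
  rw [← real_inner_self_eq_norm_sq, EuclideanSpace.inner_toLp_toLp, star_trivial]

lemma dotProduct_le_norm_mul_norm (x y : ι → ℝ) :
    x ⬝ᵥ y ≤ ‖WithLp.toLp 2 x‖ * ‖WithLp.toLp 2 y‖ := by
  rw [dotProduct_comm, ← star_trivial x, ← EuclideanSpace.inner_toLp_toLp, star_trivial]
  exact real_inner_le_norm _ _

lemma mul_norm_le_norm_mulVec {N : Matrix ι ι ℝ} {c : ℝ}
    (hN : ∀ x, c * (x ⬝ᵥ x) ≤ x ⬝ᵥ N *ᵥ x) (x : ι → ℝ) :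
    c * ‖WithLp.toLp 2 x‖ ≤ ‖WithLp.toLp 2 (N *ᵥ x)‖ := by
  rcases (norm_nonneg (WithLp.toLp 2 x)).eq_or_lt with hx | hx
  · rw [← hx, mul_zero]
    exact norm_nonneg _
  · refine le_of_mul_le_mul_right ?_ hx
    calc c * ‖WithLp.toLp 2 x‖ * ‖WithLp.toLp 2 x‖ = c * (x ⬝ᵥ x) := by
          rw [dotProduct_self_eq_norm_sq]; ring
      _ ≤ x ⬝ᵥ N *ᵥ x := hN x
      _ ≤ ‖WithLp.toLp 2 (N *ᵥ x)‖ * ‖WithLp.toLp 2 x‖ := by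
          rw [mul_comm]; exact dotProduct_le_norm_mul_norm x _

lemma isUnit_of_mul_dotProduct_self_le [DecidableEq ι] {N : Matrix ι ι ℝ} {c : ℝ} (hc : 0 < c)
    (hN : ∀ x, c * (x ⬝ᵥ x) ≤ x ⬝ᵥ N *ᵥ x) : IsUnit N := by
  refine mulVec_injective_iff_isUnit.mp fun x y hxy => ?_
  have h := mul_norm_le_norm_mulVec hN (x - y)
  rw [mulVec_sub, hxy, sub_self, WithLp.toLp_zero, norm_zero] at h
  have hxy0 : ‖WithLp.toLp 2 (x - y)‖ = 0 :=
    le_antisymm (nonpos_of_mul_nonpos_right h hc) (norm_nonneg _)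
  simpa [sub_eq_zero] using hxy0

lemma frobenius_norm_le_of_norm_mulVec_single_le {m n : Type*} [Fintype m] [Fintype n]
    [DecidableEq n] (A : Matrix m n ℝ) {b : ℝ} (hb : 0 ≤ b)
    (hA : ∀ j, ‖WithLp.toLp 2 (A *ᵥ Pi.single j 1)‖ ≤ b) :
    ‖A‖ ≤ √(Fintype.card n) * b := by
  rw [← frobenius_norm_transpose]
  refine le_of_pow_le_pow_left₀ two_ne_zero (by positivity) ?_
  calc ‖Aᵀ‖ ^ 2 = ∑ j, ‖WithLp.toLp 2 (A *ᵥ Pi.single j 1)‖ ^ 2 := by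
        change ‖WithLp.toLp 2 fun j => WithLp.toLp 2 (Aᵀ j)‖ ^ 2 = _
        simp [PiLp.norm_sq_eq_of_L2]
    _ ≤ ∑ _j : n, b ^ 2 := by gcongr with j; exact hA j
    _ = (√(Fintype.card n) * b) ^ 2 := by simp [mul_pow]

lemma frobenius_norm_inv_le [DecidableEq ι] {N : Matrix ι ι ℝ} {c : ℝ} (hc : 0 < c)
    (hN : ∀ x, c * (x ⬝ᵥ x) ≤ x ⬝ᵥ N *ᵥ x) : ‖N⁻¹‖ ≤ √(Fintype.card ι) / c := by
  have hdet := (isUnit_iff_isUnit_det N).mp (isUnit_of_mul_dotProduct_self_le hc hN)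
  rw [div_eq_mul_inv]
  refine frobenius_norm_le_of_norm_mulVec_single_le _ (inv_nonneg.mpr hc.le) fun j => ?_
  rw [← mul_le_mul_iff_of_pos_left hc, mul_inv_cancel₀ hc.ne']
  have h := mul_norm_le_norm_mulVec hN (N⁻¹ *ᵥ Pi.single j 1)
  rwa [mulVec_mulVec, mul_nonsing_inv _ hdet, one_mulVec, PiLp.toLp_single, PiLp.norm_single,
    norm_one] at h

lemma IsHermitian.iInf_eigenvalues_mul_dotProduct_self_le [DecidableEq ι] {N : Matrix ι ι ℝ}
    (hN : N.IsHermitian) (v : ι → ℝ) :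
    (⨅ i, hN.eigenvalues i) * (v ⬝ᵥ v) ≤ v ⬝ᵥ N *ᵥ v := by
  set U : Matrix ι ι ℝ := (hN.eigenvectorUnitary : Matrix ι ι ℝ)
  set w := Uᵀ *ᵥ v
  have hUt : Uᵀ = star U := (conjTranspose_eq_transpose_of_trivial U).symm
  have hquad : v ⬝ᵥ N *ᵥ v = ∑ i, hN.eigenvalues i * w i ^ 2 := by
    conv_lhs => rw [hN.spectral_theorem, Unitary.conjStarAlgAut_apply]
    rw [← hUt, ← mulVec_mulVec, ← mulVec_mulVec, dotProduct_mulVec, ← mulVec_transpose]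
    simp only [dotProduct, mulVec_diagonal, Function.comp_apply, RCLike.ofReal_real_eq_id, id, sq]
    exact Finset.sum_congr rfl fun i _ => mul_left_comm _ _ _
  have hnorm : v ⬝ᵥ v = ∑ i, w i ^ 2 := by
    have hUUt : U * Uᵀ = 1 := hUt ▸ Unitary.mul_star_self_of_mem hN.eigenvectorUnitary.2
    rw [show (∑ i, w i ^ 2) = w ⬝ᵥ w by simp [dotProduct, sq], dotProduct_mulVec,
      vecMul_transpose, mulVec_mulVec, hUUt, one_mulVec]
  rw [hquad, hnorm, Finset.mul_sum]
  gcongr with i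
  exact ciInf_le (Finite.bddBelow_range _) i

lemma IsHermitian.le_eigenvalues_of_mul_dotProduct_self_le [DecidableEq ι] {N : Matrix ι ι ℝ}
    (hN : N.IsHermitian) {c : ℝ} (h : ∀ x, c * (x ⬝ᵥ x) ≤ x ⬝ᵥ N *ᵥ x) (i : ι) :
    c ≤ hN.eigenvalues i := by
  set b := hN.eigenvectorBasis i
  have hb : b.ofLp ⬝ᵥ b.ofLp = 1 := by
    rw [dotProduct_self_eq_norm_sq]
    simp [b, hN.eigenvectorBasis.orthonormal.1 i]
  simpa [hN.eigenvalues_eq i, hb] using h b.ofLp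

lemma PosSemidef.inv_mul_mul_mul_transpose_mul_inv {κ : Type*} [Fintype κ] [DecidableEq κ]
    {A : Matrix ι ι ℝ} (hA : A.PosSemidef) {S : Matrix κ κ ℝ} (hS : S.IsHermitian)
    (W : Matrix κ ι ℝ) : (S⁻¹ * W * A * Wᵀ * S⁻¹).PosSemidef := by
  have h := hA.mul_mul_conjTranspose_same (S⁻¹ * W)
  rwa [conjTranspose_mul, hS.inv, conjTranspose_eq_transpose_of_trivial, ← Matrix.mul_assoc] at h

noncomputable def quadFormCLM (v : ι → ℝ) : Matrix ι ι ℝ →L[ℝ] ℝ :=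
  LinearMap.toContinuousLinearMap
    { toFun := fun N => v ⬝ᵥ N *ᵥ v
      map_add' := fun N₁ N₂ => by simp [add_mulVec, dotProduct_add]
      map_smul' := fun c N => by simp [smul_mulVec, dotProduct_smul] }

end Matrix

lemma HasDerivWithinAt.dotProduct_mulVec_self {ι : Type*} [Fintype ι]
    {M : ℝ → Matrix ι ι ℝ} {M' : Matrix ι ι ℝ} {s : Set ℝ} {t : ℝ}
    (h : HasDerivWithinAt M M' s t) (v : ι → ℝ) :
    HasDerivWithinAt (fun u => v ⬝ᵥ M u *ᵥ v) (v ⬝ᵥ M' *ᵥ v) s t :=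
  (Matrix.quadFormCLM v).hasFDerivAt.comp_hasDerivWithinAt t h

/-- `f' ≥ -a f` makes `s ↦ e^{a s} f s` nondecreasing. -/
lemma mul_exp_neg_mul_le_of_hasDerivWithinAt {f f' : ℝ → ℝ} {a : ℝ}
    (hf : ∀ s ∈ Set.Ici (0 : ℝ), HasDerivWithinAt f (f' s) (Set.Ici 0) s)
    (hf' : ∀ s ∈ Set.Ici (0 : ℝ), -(a * f s) ≤ f' s) {t : ℝ} (ht : 0 ≤ t) :
    f 0 * Real.exp (-(a * t)) ≤ f t := by
  have hg : ∀ s ∈ Set.Ici (0 : ℝ), HasDerivWithinAt (fun s => Real.exp (a * s) * f s)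
      (Real.exp (a * s) * (a * f s + f' s)) (Set.Ici 0) s := fun s hs => by
    have he : HasDerivAt (fun s => Real.exp (a * s)) (Real.exp (a * s) * a) s := by
      simpa using ((hasDerivAt_id s).const_mul a).exp
    exact (he.hasDerivWithinAt.mul (hf s hs)).congr_deriv (by ring)
  have hmono : MonotoneOn (fun s => Real.exp (a * s) * f s) (Set.Ici 0) :=
    monotoneOn_of_hasDerivWithinAt_nonneg (convex_Ici 0)
      (fun s hs => (hg s hs).continuousWithinAt)
      (fun s hs => (hg s (interior_subset hs)).mono interior_subset)
      fun s hs => mul_nonneg (Real.exp_pos _).le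
        (neg_le_iff_add_nonneg'.mp (hf' s (interior_subset hs)))
  have h := hmono Set.self_mem_Ici ht ht
  dsimp only at h
  rw [mul_zero, Real.exp_zero, one_mul] at h
  rwa [Real.exp_neg, ← div_eq_mul_inv, div_le_iff₀' (Real.exp_pos _)]

theorem IsSynSol.mul_exp_le_dotProduct_mulVec {k n : ℕ} {A : Matrix (Fin n) (Fin n) ℝ} {τ : ℝ}
    {W : ℝ → Matrix (Fin k) (Fin n) ℝ} {M : ℝ → Matrix (Fin k) (Fin k) ℝ}
    (hsol : IsSynSol A τ W M) (hA : A.PosSemidef) (hτ : 0 ≤ τ) (v : Fin k → ℝ) {t : ℝ}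
    (ht : 0 ≤ t) :
    (v ⬝ᵥ M 0 *ᵥ v) * Real.exp (-t / τ) ≤ v ⬝ᵥ M t *ᵥ v := by
  rw [neg_div, div_eq_inv_mul]
  refine mul_exp_neg_mul_le_of_hasDerivWithinAt
    (fun s hs => (hsol s hs).2.2.dotProduct_mulVec_self v) (fun s hs => ?_) ht
  have hdrive := (hA.inv_mul_mul_mul_transpose_mul_inv (hsol s hs).1.isHermitian
    (W s)).dotProduct_mulVec_nonneg v
  rw [star_trivial] at hdrive
  rw [smul_mulVec, sub_mulVec, dotProduct_smul, dotProduct_sub, smul_eq_mul, mul_sub]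
  linarith [mul_nonneg (inv_nonneg.mpr hτ) hdrive]

theorem M_eigenvalue_lower_bound_general {k n : ℕ} (hk : 0 < k)
    (A : Matrix (Fin n) (Fin n) ℝ) (hA : A.PosDef)
    (τ : ℝ) (hτ : 0 < τ)
    (M₀ : Matrix (Fin k) (Fin k) ℝ) (hM₀ : M₀.PosDef)
    (W : ℝ → Matrix (Fin k) (Fin n) ℝ) (M : ℝ → Matrix (Fin k) (Fin k) ℝ)
    (hsol : IsSynSol A τ W M) (hM0 : M 0 = M₀)
    (m : ℝ) (hm : m = ⨅ i : Fin k, hM₀.isHermitian.eigenvalues i) :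
    ∀ t : ℝ, 0 ≤ t →
      (∀ v : Fin k → ℝ, v ⬝ᵥ v = 1 →
        m * Real.exp (-t / τ) ≤ v ⬝ᵥ (M t).mulVec v) ∧
      (∀ (hH : (M t).IsHermitian) (i : Fin k),
        m * Real.exp (-t / τ) ≤ hH.eigenvalues i) ∧
      ‖(M t)⁻¹‖ ≤ (Real.sqrt k / m) * Real.exp (t / τ) := by
  intro t ht
  have : Nonempty (Fin k) := ⟨⟨0, hk⟩⟩
  have hm_pos : 0 < m := by
    obtain ⟨i, hi⟩ := exists_eq_ciInf_of_finite (f := hM₀.isHermitian.eigenvalues)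
    exact hm ▸ hi ▸ hM₀.eigenvalues_pos i
  have hquad : ∀ v, m * Real.exp (-t / τ) * (v ⬝ᵥ v) ≤ v ⬝ᵥ M t *ᵥ v := fun v =>
    calc m * Real.exp (-t / τ) * (v ⬝ᵥ v) = m * (v ⬝ᵥ v) * Real.exp (-t / τ) := by ring
      _ ≤ (v ⬝ᵥ M 0 *ᵥ v) * Real.exp (-t / τ) := by
          gcongr
          exact hM0 ▸ hm ▸ hM₀.isHermitian.iInf_eigenvalues_mul_dotProduct_self_le v
      _ ≤ v ⬝ᵥ M t *ᵥ v := hsol.mul_exp_le_dotProduct_mulVec hA.posSemidef hτ.le v ht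
  refine ⟨fun v hv => by simpa [hv] using hquad v,
    fun hH => hH.le_eigenvalues_of_mul_dotProduct_self_le hquad, ?_⟩
  calc ‖(M t)⁻¹‖ ≤ √k / (m * Real.exp (-t / τ)) := by
        simpa using frobenius_norm_inv_le (by positivity) hquad
    _ = (√k / m) * Real.exp (t / τ) := by rw [neg_div, Real.exp_neg]; field_simp

/-- Along any solution with timescale `τ > 0`, with `m = σ_min(M₀)` the smallest
eigenvalue of `M₀`: for every `t ≥ 0` and every unit vector `v`, `vᵀM(t)v ≥ m·e^{−t/τ}`;
consequently every eigenvalue of `M(t)` is at least `m·e^{−t/τ}`, and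
`‖M(t)⁻¹‖ ≤ (√k / m)·e^{t/τ}` (Frobenius norm). -/
theorem M_eigenvalue_lower_bound {k n : ℕ} (hk : 0 < k) (hkn : k < n)
    (A : Matrix (Fin n) (Fin n) ℝ) (hA : A.PosDef)
    (τ : ℝ) (hτ : 0 < τ)
    (W₀ : Matrix (Fin k) (Fin n) ℝ) (M₀ : Matrix (Fin k) (Fin k) ℝ) (hM₀ : M₀.PosDef)
    (W : ℝ → Matrix (Fin k) (Fin n) ℝ) (M : ℝ → Matrix (Fin k) (Fin k) ℝ)
    (hsol : IsSynSol A τ W M) (hW0 : W 0 = W₀) (hM0 : M 0 = M₀)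
    (m : ℝ) (hm : m = ⨅ i : Fin k, hM₀.isHermitian.eigenvalues i) :
    ∀ t : ℝ, 0 ≤ t →
      (∀ v : Fin k → ℝ, v ⬝ᵥ v = 1 →
        m * Real.exp (-t / τ) ≤ v ⬝ᵥ (M t).mulVec v) ∧
      (∀ (hH : (M t).IsHermitian) (i : Fin k),
        m * Real.exp (-t / τ) ≤ hH.eigenvalues i) ∧
      ‖(M t)⁻¹‖ ≤ (Real.sqrt k / m) * Real.exp (t / τ) :=
  M_eigenvalue_lower_bound_general hk A hA τ hτ M₀ hM₀ W M hsol hM0 m hm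
end

section
/- Let τ > 0 and let (W(t), M(t)) be a solution of the synaptic ODE with timescale τ and initial condition (W₀, M₀) ∈ D, and let m = σ_min(M₀) be the smallest eigenvalue of M₀. Then for all t ≥ 0, ‖W(t)‖ ≤ ‖W₀‖ · exp[ 2·( (√k / m)·‖A‖·e^{t/τ} + 1 )·t ]. -/
open Matrix Filter
open scoped Matrix

attribute [local instance] Matrix.frobeniusNormedAddCommGroup Matrix.frobeniusNormedSpace

/-!
Along a solution, `t ↦ e^{t/τ} vᵀ M(t) v` is nondecreasing for every vector `v`, since its
derivative is `e^{t/τ} τ⁻¹ vᵀ M⁻¹ W A Wᵀ M⁻¹ v ≥ 0`. Hence `M(t) ≥ m e^{-t/τ}` as quadratic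
forms, so every column of `M(t)⁻¹` has length at most `e^{t/τ} / m` and
`‖M(t)⁻¹‖ ≤ √k e^{t/τ} / m`. On `[0, T]` this gives `‖dW/dt‖ ≤ 2 (√k/m ‖A‖ e^{T/τ} + 1) ‖W‖`,
and Grönwall's inequality concludes.
-/

namespace Matrix

variable {ι : Type*} [Fintype ι]

open scoped MatrixOrder in
theorem IsHermitian.mul_dotProduct_self_le [DecidableEq ι] {M : Matrix ι ι ℝ}
    (hM : M.IsHermitian) {c : ℝ} (hc : ∀ i, c ≤ hM.eigenvalues i) (v : ι → ℝ) :
    c * (v ⬝ᵥ v) ≤ v ⬝ᵥ M *ᵥ v := by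
  have hle : algebraMap ℝ _ c ≤ M := by
    rw [algebraMap_le_iff_le_spectrum (a := M) hM.isSelfAdjoint,
      hM.spectrum_real_eq_range_eigenvalues]
    rintro _ ⟨i, rfl⟩
    exact hc i
  simpa [Algebra.algebraMap_eq_smul_one, sub_mulVec, smul_mulVec] using
    (le_iff.1 hle).dotProduct_mulVec_nonneg v

theorem sq_mul_dotProduct_self_le_of_coercive {M : Matrix ι ι ℝ} {c : ℝ} (hc : 0 ≤ c)
    (hcoer : ∀ v, c * (v ⬝ᵥ v) ≤ v ⬝ᵥ M *ᵥ v) (v : ι → ℝ) :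
    c ^ 2 * (v ⬝ᵥ v) ≤ (M *ᵥ v) ⬝ᵥ (M *ᵥ v) := by
  have hv : 0 ≤ v ⬝ᵥ v := dotProduct_self_star_nonneg v
  have cauchySchwarz : (v ⬝ᵥ M *ᵥ v) ^ 2 ≤ (v ⬝ᵥ v) * ((M *ᵥ v) ⬝ᵥ (M *ᵥ v)) := by
    simpa only [dotProduct, sq] using Finset.sum_mul_sq_le_sq_mul_sq Finset.univ v (M *ᵥ v)
  rcases hv.eq_or_lt with hv0 | hvpos
  · rw [← hv0, mul_zero]
    exact dotProduct_self_star_nonneg _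
  · refine le_of_mul_le_mul_left ?_ hvpos
    nlinarith [hcoer v, mul_nonneg hc hv]

theorem frobenius_norm_le_of_sum_sq_col_le {m : Type*} [Fintype m] {B : Matrix m ι ℝ} {r : ℝ}
    (hr : 0 ≤ r) (hB : ∀ j, ∑ i, B i j ^ 2 ≤ r ^ 2) :
    ‖B‖ ≤ √(Fintype.card ι) * r := by
  have hsum : ∑ i, ∑ j, B i j ^ 2 ≤ Fintype.card ι * r ^ 2 := by
    rw [Finset.sum_comm]
    simpa using Finset.sum_le_sum fun j (_ : j ∈ Finset.univ) => hB j
  rw [frobenius_norm_def, ← Real.sqrt_eq_rpow, ← Real.sqrt_sq hr, ← Real.sqrt_mul (by positivity)]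
  refine Real.sqrt_le_sqrt ?_
  simpa [Real.rpow_two] using hsum

theorem frobenius_norm_inv_le_of_coercive [DecidableEq ι] {M : Matrix ι ι ℝ}
    (hM : IsUnit M.det) {c : ℝ} (hc : 0 < c) (hcoer : ∀ v, c * (v ⬝ᵥ v) ≤ v ⬝ᵥ M *ᵥ v) :
    ‖M⁻¹‖ ≤ √(Fintype.card ι) / c := by
  rw [div_eq_mul_inv]
  refine frobenius_norm_le_of_sum_sq_col_le (by positivity) fun j => ?_
  have hcol := sq_mul_dotProduct_self_le_of_coercive hc.le hcoer (M⁻¹ *ᵥ Pi.single j 1)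
  rw [mulVec_mulVec, mul_nonsing_inv M hM, one_mulVec, mulVec_single_one] at hcol
  have hcol' : c ^ 2 * ∑ i, M⁻¹ i j ^ 2 ≤ 1 := by
    simpa [dotProduct, sq, Pi.single_apply] using hcol
  rw [inv_pow, ← mul_one (c ^ 2)⁻¹, le_inv_mul_iff₀ (by positivity)]
  exact hcol'

theorem _root_.HasDerivWithinAt.dotProduct_mulVec {M : ℝ → Matrix ι ι ℝ}
    {M' : Matrix ι ι ℝ} {s : Set ℝ} {t : ℝ} (hM : HasDerivWithinAt M M' s t) (v : ι → ℝ) :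
    HasDerivWithinAt (fun t => v ⬝ᵥ M t *ᵥ v) (v ⬝ᵥ M' *ᵥ v) s t :=
  (LinearMap.toContinuousLinearMap
    ((dotProductBilin ℝ ℝ v) ∘ₗ (mulVecBilin ℝ ℝ).flip v)).hasFDerivAt.comp_hasDerivWithinAt t hM

end Matrix

namespace IsSynSol

variable {k n : ℕ} {A : Matrix (Fin n) (Fin n) ℝ} {τ : ℝ} {W : ℝ → Matrix (Fin k) (Fin n) ℝ}
  {M : ℝ → Matrix (Fin k) (Fin k) ℝ}

theorem monotoneOn_exp_mul_dotProduct_mulVec (hsol : IsSynSol A τ W M) (hA : A.PosSemidef)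
    (hτ : 0 ≤ τ) (v : Fin k → ℝ) :
    MonotoneOn (fun t => Real.exp (t / τ) * (v ⬝ᵥ M t *ᵥ v)) (Set.Ici 0) := by
  have hexp (t : ℝ) : HasDerivAt (fun t => Real.exp (t / τ)) (Real.exp (t / τ) * (1 / τ)) t :=
    (Real.hasDerivAt_exp _).comp t ((hasDerivAt_id t).div_const τ)
  refine monotoneOn_of_hasDerivWithinAt_nonneg (convex_Ici 0)
    (f' := fun t => Real.exp (t / τ) * τ⁻¹ * (v ⬝ᵥ ((M t)⁻¹ * W t * A * (W t)ᵀ * (M t)⁻¹) *ᵥ v))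
    ?_ ?_ ?_
  · exact fun t ht => (hexp t).continuousAt.continuousWithinAt.mul
      ((hsol t ht).2.2.dotProduct_mulVec v).continuousWithinAt
  · intro t ht
    rw [interior_Ici] at ht ⊢
    refine (((hexp t).hasDerivWithinAt.mul ((hsol t ht.le).2.2.dotProduct_mulVec v)).mono
      Set.Ioi_subset_Ici_self).congr_deriv ?_
    simp only [smul_mulVec, dotProduct_smul, sub_mulVec, dotProduct_sub, smul_eq_mul]
    ring
  · intro t ht
    rw [interior_Ici] at ht
    have hBH : ((M t)⁻¹ * W t)ᴴ = (W t)ᵀ * (M t)⁻¹ := by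
      rw [conjTranspose_mul, (hsol t ht.le).1.isHermitian.inv.eq,
        conjTranspose_eq_transpose_of_trivial]
    have hP : ((M t)⁻¹ * W t * A * (W t)ᵀ * (M t)⁻¹).PosSemidef := by
      have := hA.mul_mul_conjTranspose_same ((M t)⁻¹ * W t)
      rwa [hBH, ← Matrix.mul_assoc] at this
    have := hP.dotProduct_mulVec_nonneg v
    simp only [star_trivial] at this
    positivity

theorem div_exp_mul_dotProduct_self_le (hsol : IsSynSol A τ W M) (hA : A.PosSemidef)
    (hτ : 0 ≤ τ) {c : ℝ} (h₀ : ∀ v, c * (v ⬝ᵥ v) ≤ v ⬝ᵥ M 0 *ᵥ v) {t : ℝ} (ht : 0 ≤ t)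
    (v : Fin k → ℝ) :
    c / Real.exp (t / τ) * (v ⬝ᵥ v) ≤ v ⬝ᵥ M t *ᵥ v := by
  have hmono : v ⬝ᵥ M 0 *ᵥ v ≤ Real.exp (t / τ) * (v ⬝ᵥ M t *ᵥ v) := by
    simpa using hsol.monotoneOn_exp_mul_dotProduct_mulVec hA hτ v Set.self_mem_Ici ht ht
  rw [div_mul_eq_mul_div, div_le_iff₀' (Real.exp_pos _)]
  exact (h₀ v).trans hmono

theorem norm_inv_le (hsol : IsSynSol A τ W M) (hA : A.PosSemidef) (hτ : 0 ≤ τ) {c : ℝ}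
    (hc : 0 < c) (h₀ : ∀ v, c * (v ⬝ᵥ v) ≤ v ⬝ᵥ M 0 *ᵥ v) {t : ℝ} (ht : 0 ≤ t) :
    ‖(M t)⁻¹‖ ≤ √k / c * Real.exp (t / τ) := by
  have := frobenius_norm_inv_le_of_coercive ((isUnit_iff_isUnit_det _).1 (hsol t ht).1.isUnit)
    (by positivity) (hsol.div_exp_mul_dotProduct_self_le hA hτ h₀ ht)
  rwa [Fintype.card_fin, div_div_eq_mul_div, mul_div_right_comm] at this

theorem norm_W_le (hsol : IsSynSol A τ W M) (hA : A.PosSemidef) (hτ : 0 ≤ τ) {c : ℝ}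
    (hc : 0 < c) (h₀ : ∀ v, c * (v ⬝ᵥ v) ≤ v ⬝ᵥ M 0 *ᵥ v) {T : ℝ} (hT : 0 ≤ T) :
    ‖W T‖ ≤ ‖W 0‖ * Real.exp (2 * (√k / c * ‖A‖ * Real.exp (T / τ) + 1) * T) := by
  set K := 2 * (√k / c * ‖A‖ * Real.exp (T / τ) + 1)
  have hcont : ContinuousOn W (Set.Icc 0 T) := fun t ht =>
    (hsol t ht.1).2.1.continuousWithinAt.mono Set.Icc_subset_Ici_self
  have hderiv : ∀ t ∈ Set.Ico 0 T,
      HasDerivWithinAt W ((2 : ℝ) • ((M t)⁻¹ * W t * A - W t)) (Set.Ici t) t :=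
    fun t ht => (hsol t ht.1).2.1.mono (Set.Ici_subset_Ici.mpr ht.1)
  have hbound : ∀ t ∈ Set.Ico 0 T, ‖(2 : ℝ) • ((M t)⁻¹ * W t * A - W t)‖ ≤ K * ‖W t‖ + 0 := by
    intro t ht
    have hinv : ‖(M t)⁻¹‖ ≤ √k / c * Real.exp (T / τ) :=
      (hsol.norm_inv_le hA hτ hc h₀ ht.1).trans (by gcongr; exact ht.2.le)
    calc ‖(2 : ℝ) • ((M t)⁻¹ * W t * A - W t)‖
        ≤ 2 * (‖(M t)⁻¹‖ * ‖W t‖ * ‖A‖ + ‖W t‖) := by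
          rw [norm_smul, Real.norm_two]
          gcongr
          refine (norm_sub_le _ _).trans (add_le_add_left ?_ _)
          exact (frobenius_norm_mul _ _).trans (by gcongr; exact frobenius_norm_mul _ _)
      _ ≤ 2 * (√k / c * Real.exp (T / τ) * ‖W t‖ * ‖A‖ + ‖W t‖) := by gcongr
      _ = K * ‖W t‖ + 0 := by ring
  simpa [gronwallBound_ε0] using
    norm_le_gronwallBound_of_norm_deriv_right_le hcont hderiv le_rfl hbound T ⟨hT, le_rfl⟩

end IsSynSol

theorem W_growth_bound_general {k n : ℕ} (hk : 0 < k)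
    (A : Matrix (Fin n) (Fin n) ℝ) (hA : A.PosDef)
    (τ : ℝ) (hτ : 0 < τ)
    (W₀ : Matrix (Fin k) (Fin n) ℝ) (M₀ : Matrix (Fin k) (Fin k) ℝ) (hM₀ : M₀.PosDef)
    (W : ℝ → Matrix (Fin k) (Fin n) ℝ) (M : ℝ → Matrix (Fin k) (Fin k) ℝ)
    (hsol : IsSynSol A τ W M) (hW0 : W 0 = W₀) (hM0 : M 0 = M₀)
    (m : ℝ) (hm : m = ⨅ i : Fin k, hM₀.isHermitian.eigenvalues i) :
    ∀ t : ℝ, 0 ≤ t →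
      ‖W t‖ ≤ ‖W₀‖ * Real.exp (2 * ((Real.sqrt k / m) * ‖A‖ * Real.exp (t / τ) + 1) * t) := by
  intro t ht
  have hm_le : ∀ i, m ≤ hM₀.isHermitian.eigenvalues i := fun i =>
    hm ▸ ciInf_le (Set.finite_range _).bddBelow i
  have hm_pos : 0 < m := by
    have : Nonempty (Fin k) := ⟨⟨0, hk⟩⟩
    obtain ⟨i, hi⟩ := exists_eq_ciInf_of_finite (f := hM₀.isHermitian.eigenvalues)
    exact hm ▸ hi ▸ hM₀.eigenvalues_pos i
  have h₀ : ∀ v, m * (v ⬝ᵥ v) ≤ v ⬝ᵥ M 0 *ᵥ v :=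
    hM0 ▸ hM₀.isHermitian.mul_dotProduct_self_le hm_le
  exact hW0 ▸ hsol.norm_W_le hA.posSemidef hτ.le hm_pos h₀ ht

/-- Gronwall bound on the feedforward weights: along any solution with timescale `τ > 0`,
with `m = σ_min(M₀)` the smallest eigenvalue of `M₀`, for all `t ≥ 0`,
`‖W(t)‖ ≤ ‖W₀‖·exp[2·((√k/m)·‖A‖·e^{t/τ} + 1)·t]` (Frobenius norms). -/
theorem W_growth_bound {k n : ℕ} (hk : 0 < k) (hkn : k < n)
    (A : Matrix (Fin n) (Fin n) ℝ) (hA : A.PosDef)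
    (τ : ℝ) (hτ : 0 < τ)
    (W₀ : Matrix (Fin k) (Fin n) ℝ) (M₀ : Matrix (Fin k) (Fin k) ℝ) (hM₀ : M₀.PosDef)
    (W : ℝ → Matrix (Fin k) (Fin n) ℝ) (M : ℝ → Matrix (Fin k) (Fin k) ℝ)
    (hsol : IsSynSol A τ W M) (hW0 : W 0 = W₀) (hM0 : M 0 = M₀)
    (m : ℝ) (hm : m = ⨅ i : Fin k, hM₀.isHermitian.eigenvalues i) :
    ∀ t : ℝ, 0 ≤ t →
      ‖W t‖ ≤ ‖W₀‖ * Real.exp (2 * ((Real.sqrt k / m) * ‖A‖ * Real.exp (t / τ) + 1) * t) :=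
  W_growth_bound_general hk A hA τ hτ W₀ M₀ hM₀ W M hsol hW0 hM0 m hm
end
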